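/- arXiv:2501.18363 — 3 statements merged into one kernel-verified Lean document; each statement's English description precedes it below -/
import Mathlib

section
/- Let α ∈ (0,1), ε ∈ (0,1), K ∈ ℕ with K ≥ 1, let (η_t)_{t≥1} be a sequence of positive reals, let (s̃_t)_{t≥1} and (s_{t,y})_{t≥1, 1≤y≤K} be arbitrary sequences in [0,1], let τ_1 ∈ [0,1], and define τ_{t+1} = τ_t − η_t·g̃(τ_t, s̃_t, (s_{t,y})_{y=1}^K). Then for every integer T ≥ 1: −(max_{1≤t≤T−1} η_t)·(α + ε/(1−ε)) ≤ τ_T ≤ 1 + (max_{1≤t≤T−1} η_t)·(1/(1−ε) − α), with the convention that the maximum over an empty index set is 0. -/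
/-!
Once `τ` leaves `[0, 1]` all indicators in the subgradient agree, so it equals `α ≥ 0` above `1`
and `α - 1 ≤ 0` below `0`: the update never pushes an iterate further away from `[0, 1]`.
An iterate can therefore only end up outside `[0, 1]` through one step taken from inside, and that
step overshoots by at most `η_t` times the uniform bound `α + ε / (1 - ε)` (below) or
`1 / (1 - ε) - α` (above) on the subgradient.
-/

noncomputable def robustGrad (α ε : ℝ) (K : ℕ) (τ stil : ℝ) (s : Fin K → ℝ) : ℝ :=
  (1 / (1 - ε)) * ((if stil ≤ τ then (1:ℝ) else 0) - (1 - α))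
    - (ε / ((K : ℝ) * (1 - ε))) * ∑ y : Fin K, ((if s y ≤ τ then (1:ℝ) else 0) - (1 - α))

open Finset

theorem Real.le_biSup_of_nonneg {ι : Type*} {s : Finset ι} {f : ι → ℝ} (hf : ∀ i ∈ s, 0 ≤ f i)
    {i : ι} (hi : i ∈ s) : f i ≤ ⨆ j ∈ s, f j :=
  not_lt.1 fun h => lt_irrefl _ <|
    (s.finite_toSet.ciSup_lt_iff ⟨i, hi, by simpa using hf i hi⟩).1 h i hi

section Descent

variable {𝕜 : Type*} [Field 𝕜] [LinearOrder 𝕜] [IsStrictOrderedRing 𝕜]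
  {τ η g : ℕ → 𝕜} {H G : 𝕜} {T : ℕ}

theorem sub_mul_le_of_descent {lo : 𝕜} (hH : 0 ≤ H) (hG : 0 ≤ G) (hτ1 : lo ≤ τ 1)
    (hη : ∀ t, 1 ≤ t → t < T → 0 ≤ η t ∧ η t ≤ H)
    (hg : ∀ t, 1 ≤ t → t < T → g t ≤ G)
    (hg_nonpos : ∀ t, 1 ≤ t → t < T → τ t < lo → g t ≤ 0)
    (hupd : ∀ t, 1 ≤ t → τ (t + 1) = τ t - η t * g t) (hT : 1 ≤ T) :
    lo - H * G ≤ τ T := by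
  suffices ∀ n, 1 ≤ n → n ≤ T → lo - H * G ≤ τ n from this T hT le_rfl
  intro n hn
  induction n, hn using Nat.le_induction with
  | base => intro _; nlinarith [mul_nonneg hH hG]
  | succ t ht ih =>
    intro htT
    obtain ⟨hη0, hηH⟩ := hη t ht htT
    rw [hupd t ht]
    rcases le_or_gt lo (τ t) with hlo | hlo
    · nlinarith [mul_le_mul_of_nonneg_left (hg t ht htT) hη0, mul_le_mul_of_nonneg_right hηH hG]
    · nlinarith [ih (by omega), mul_nonpos_of_nonneg_of_nonpos hη0 (hg_nonpos t ht htT hlo)]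

theorem le_add_mul_of_descent {hi : 𝕜} (hH : 0 ≤ H) (hG : 0 ≤ G) (hτ1 : τ 1 ≤ hi)
    (hη : ∀ t, 1 ≤ t → t < T → 0 ≤ η t ∧ η t ≤ H)
    (hg : ∀ t, 1 ≤ t → t < T → -G ≤ g t)
    (hg_nonneg : ∀ t, 1 ≤ t → t < T → hi < τ t → 0 ≤ g t)
    (hupd : ∀ t, 1 ≤ t → τ (t + 1) = τ t - η t * g t) (hT : 1 ≤ T) :
    τ T ≤ hi + H * G := by
  have := sub_mul_le_of_descent (τ := (-τ ·)) (g := (-g ·)) hH hG (neg_le_neg hτ1) hη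
    (fun t h1 h2 => neg_le.1 (hg t h1 h2))
    (fun t h1 h2 h => neg_nonpos.2 (hg_nonneg t h1 h2 (neg_lt_neg_iff.1 h)))
    (fun t ht => by rw [hupd t ht]; ring) hT
  linarith

end Descent

section RobustGrad

variable {α ε : ℝ} {K : ℕ} {τ stil : ℝ} {s : Fin K → ℝ}

theorem robustGrad_eq (hK : K ≠ 0) (hε : ε ≠ 1) :
    robustGrad α ε K τ stil s =
      ((if stil ≤ τ then 1 else 0) - ε * (#{y | s y ≤ τ} / K)) / (1 - ε) - (1 - α) := by
  have : (1 : ℝ) - ε ≠ 0 := sub_ne_zero.2 hε.symm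
  simp only [robustGrad, sum_sub_distrib, sum_boole, sum_const, card_univ, Fintype.card_fin,
    nsmul_eq_mul]
  field_simp
  ring

theorem card_filter_div_card_mem_Icc (hK : K ≠ 0) :
    (#{y | s y ≤ τ} / K : ℝ) ∈ Set.Icc 0 1 := by
  refine ⟨by positivity, div_le_one_of_le₀ ?_ K.cast_nonneg⟩
  exact_mod_cast (card_filter_le _ _).trans (card_univ.trans (Fintype.card_fin K)).le

theorem robustGrad_le (hK : K ≠ 0) (hε0 : 0 ≤ ε) (hε1 : ε < 1) :
    robustGrad α ε K τ stil s ≤ α + ε / (1 - ε) := by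
  have h1ε : 0 < 1 - ε := sub_pos.2 hε1
  have hI : (if stil ≤ τ then (1 : ℝ) else 0) ≤ 1 := by split_ifs <;> norm_num
  have hA := (card_filter_div_card_mem_Icc (s := s) (τ := τ) hK).1
  calc robustGrad α ε K τ stil s ≤ 1 / (1 - ε) - (1 - α) := by
        rw [robustGrad_eq hK hε1.ne]; gcongr; nlinarith
    _ = α + ε / (1 - ε) := by field_simp; ring

theorem neg_le_robustGrad (hK : K ≠ 0) (hε0 : 0 ≤ ε) (hε1 : ε < 1) :
    -(1 / (1 - ε) - α) ≤ robustGrad α ε K τ stil s := by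
  have h1ε : 0 < 1 - ε := sub_pos.2 hε1
  have hI : 0 ≤ (if stil ≤ τ then (1 : ℝ) else 0) := by split_ifs <;> norm_num
  have hA := (card_filter_div_card_mem_Icc (s := s) (τ := τ) hK).2
  calc -(1 / (1 - ε) - α) = -ε / (1 - ε) - (1 - α) := by field_simp; ring
    _ ≤ robustGrad α ε K τ stil s := by
        rw [robustGrad_eq hK hε1.ne]; gcongr; nlinarith

theorem robustGrad_of_le (hK : K ≠ 0) (hε : ε ≠ 1) (hstil : stil ≤ τ) (hs : ∀ y, s y ≤ τ) :
    robustGrad α ε K τ stil s = α := by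
  have : (1 : ℝ) - ε ≠ 0 := sub_ne_zero.2 hε.symm
  rw [robustGrad_eq hK hε, if_pos hstil, filter_true_of_mem fun y _ => hs y, card_univ,
    Fintype.card_fin, div_self (Nat.cast_ne_zero.2 hK)]
  field_simp
  ring

theorem robustGrad_of_lt (hK : K ≠ 0) (hε : ε ≠ 1) (hstil : τ < stil) (hs : ∀ y, τ < s y) :
    robustGrad α ε K τ stil s = α - 1 := by
  rw [robustGrad_eq hK hε, if_neg hstil.not_ge, filter_false_of_mem fun y _ => (hs y).not_ge]
  simp

end RobustGrad

/-- boundedness of the NR-OCP threshold iterates under dynamic learning rates.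
The maximum over the (possibly empty) index set `1 ≤ t ≤ T - 1` is taken as a real-valued
supremum, which equals `0` for the empty set (Mathlib's convention `sSup ∅ = 0` for `ℝ`). -/
theorem nrocp_threshold_bounded_dynamic_lr
    (α ε : ℝ) (hα : α ∈ Set.Ioo (0:ℝ) 1) (hε : ε ∈ Set.Ioo (0:ℝ) 1)
    (K : ℕ) (hK : 1 ≤ K)
    (η : ℕ → ℝ) (hη : ∀ t, 1 ≤ t → 0 < η t)
    (stil : ℕ → ℝ) (hstil : ∀ t, 1 ≤ t → stil t ∈ Set.Icc (0:ℝ) 1)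
    (s : ℕ → Fin K → ℝ) (hs : ∀ t, 1 ≤ t → ∀ y, s t y ∈ Set.Icc (0:ℝ) 1)
    (τ : ℕ → ℝ) (hτ1 : τ 1 ∈ Set.Icc (0:ℝ) 1)
    (hupd : ∀ t, 1 ≤ t → τ (t + 1) = τ t - η t * robustGrad α ε K (τ t) (stil t) (s t))
    (T : ℕ) (hT : 1 ≤ T) :
    -(⨆ t ∈ Finset.Icc 1 (T - 1), η t) * (α + ε / (1 - ε)) ≤ τ T ∧
      τ T ≤ 1 + (⨆ t ∈ Finset.Icc 1 (T - 1), η t) * (1 / (1 - ε) - α) := by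
  obtain ⟨hα0, hα1⟩ := hα
  obtain ⟨hε0, hε1⟩ := hε
  have hK0 : K ≠ 0 := Nat.one_le_iff_ne_zero.1 hK
  have hη0 : ∀ t ∈ Icc 1 (T - 1), 0 ≤ η t := fun t ht => (hη t (mem_Icc.1 ht).1).le
  have hH : 0 ≤ ⨆ t ∈ Icc 1 (T - 1), η t :=
    Real.iSup_nonneg fun t => Real.iSup_nonneg fun ht => hη0 t ht
  have hηH : ∀ t, 1 ≤ t → t < T → 0 ≤ η t ∧ η t ≤ ⨆ t ∈ Icc 1 (T - 1), η t := fun t h1 h2 =>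
    ⟨(hη t h1).le, Real.le_biSup_of_nonneg hη0 (mem_Icc.2 ⟨h1, by omega⟩)⟩
  have h1ε : 1 ≤ 1 / (1 - ε) := by rw [le_div_iff₀ (by linarith)]; linarith
  constructor
  · have := sub_mul_le_of_descent hH (by positivity) hτ1.1 hηH
      (fun t _ _ => robustGrad_le hK0 hε0.le hε1)
      (fun t ht _ hτ => by
        rw [robustGrad_of_lt hK0 hε1.ne (hτ.trans_le (hstil t ht).1)
          fun y => hτ.trans_le (hs t ht y).1]
        linarith)
      hupd hT
    linarith
  · refine le_add_mul_of_descent hH (by linarith) hτ1.2 hηH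
      (fun t _ _ => neg_le_robustGrad hK0 hε0.le hε1)
      (fun t ht _ hτ => ?_) hupd hT
    rw [robustGrad_of_le hK0 hε1.ne ((hstil t ht).2.trans hτ.le)
      fun y => (hs t ht y).2.trans hτ.le]
    exact hα0.le
end

section
/- Let α ∈ (0,1), η > 0, let (s_t)_{t≥1} be an arbitrary sequence in [0,1], let τ_1 ∈ [0,1], and define τ_{t+1} = τ_t − η·(1{s_t ≤ τ_t} − (1−α)) for every t ≥ 1. Then for every integer T ≥ 1: | Σ_{t=1}^T ( 1{s_t ≤ τ_t} − (1−α) ) | ≤ 1/η + max(α, 1−α). -/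
/-!
The update is gradient descent with step `η`, so the sum telescopes to `(τ₁ - τ_{T+1}) / η`.
The iterates never leave `[-αη, 1 + (1 - α)η]`: a step down by `αη` only happens from
`τ ≥ s ≥ 0`, and a step up by `(1 - α)η` only from `τ < s ≤ 1`.
-/

open Finset

theorem Finset.sum_Icc_eq_div_of_step {K : Type*} [Field K] {x g : ℕ → K} {η : K} (hη : η ≠ 0)
    (hstep : ∀ t, 1 ≤ t → x (t + 1) = x t - η * g t) {T : ℕ} (hT : 1 ≤ T) :
    ∑ t ∈ Icc 1 T, g t = (x 1 - x (T + 1)) / η := by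
  have hg : ∀ t ∈ Icc 1 T, g t = -(x (t + 1) - x t) / η := fun t ht => by
    rw [hstep t (mem_Icc.1 ht).1]
    field_simp
    ring
  rw [sum_congr rfl hg, ← sum_div, sum_neg_distrib, sum_Icc_sub hT, neg_sub]

noncomputable def pinballGrad (α τ s : ℝ) : ℝ := (if s ≤ τ then 1 else 0) - (1 - α)

theorem sub_mul_pinballGrad_mem_Icc {α η τ s : ℝ} (hα : α ∈ Set.Icc (0 : ℝ) 1) (hη : 0 ≤ η)
    (hs : s ∈ Set.Icc (0 : ℝ) 1) (hτ : τ ∈ Set.Icc (-(α * η)) (1 + (1 - α) * η)) :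
    τ - η * pinballGrad α τ s ∈ Set.Icc (-(α * η)) (1 + (1 - α) * η) := by
  obtain ⟨hα0, hα1⟩ := hα
  obtain ⟨hs0, hs1⟩ := hs
  obtain ⟨hτl, hτu⟩ := hτ
  unfold pinballGrad
  split_ifs with hsτ
  · constructor <;> nlinarith
  · constructor <;> nlinarith

theorem mem_Icc_of_pinball_step {α η : ℝ} (hα : α ∈ Set.Icc (0 : ℝ) 1) (hη : 0 ≤ η)
    {s τ : ℕ → ℝ} (hs : ∀ t, 1 ≤ t → s t ∈ Set.Icc (0 : ℝ) 1) (hτ1 : τ 1 ∈ Set.Icc (0 : ℝ) 1)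
    (hupd : ∀ t, 1 ≤ t → τ (t + 1) = τ t - η * pinballGrad α (τ t) (s t))
    {t : ℕ} (ht : 1 ≤ t) : τ t ∈ Set.Icc (-(α * η)) (1 + (1 - α) * η) := by
  induction t, ht using Nat.le_induction with
  | base => constructor <;> nlinarith [hτ1.1, hτ1.2, hα.1, hα.2]
  | succ t ht ih =>
    rw [hupd t ht]
    exact sub_mul_pinballGrad_mem_Icc hα hη (hs t ht) ih

/-- the accumulated pinball subgradients of ACI with constant learning rate
telescope to a bounded quantity. -/
theorem aci_sum_grad_bounded_constant_lr
    (α η : ℝ) (hα : α ∈ Set.Ioo (0:ℝ) 1) (hη : 0 < η)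
    (s : ℕ → ℝ) (hs : ∀ t, 1 ≤ t → s t ∈ Set.Icc (0:ℝ) 1)
    (τ : ℕ → ℝ) (hτ1 : τ 1 ∈ Set.Icc (0:ℝ) 1)
    (hupd : ∀ t, 1 ≤ t →
      τ (t + 1) = τ t - η * ((if s t ≤ τ t then (1:ℝ) else 0) - (1 - α)))
    (T : ℕ) (hT : 1 ≤ T) :
    |∑ t ∈ Finset.Icc 1 T, ((if s t ≤ τ t then (1:ℝ) else 0) - (1 - α))|
      ≤ 1 / η + max α (1 - α) := by
  have hstep : ∀ t, 1 ≤ t → τ (t + 1) = τ t - η * pinballGrad α (τ t) (s t) := hupd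
  have hτT := mem_Icc_of_pinball_step (Set.Ioo_subset_Icc_self hα) hη.le hs hτ1 hstep
    (t := T + 1) (by omega)
  change |∑ t ∈ Icc 1 T, pinballGrad α (τ t) (s t)| ≤ _
  rw [sum_Icc_eq_div_of_step hη.ne' hstep hT, abs_div, abs_of_pos hη, div_le_iff₀ hη,
    add_mul, one_div_mul_cancel hη.ne', abs_le]
  constructor <;>
    nlinarith [hτ1.1, hτ1.2, hτT.1, hτT.2, le_max_left α (1 - α), le_max_right α (1 - α)]
end

section
/- Consider the online uniform label noise model with noise rate ε ∈ (0,1) and α ∈ (0,1), and for each t ≥ 1 let τ̂_t be a real-valued F_{t−1}-measurable random variable. Then almost surely, the conditional expectation of the robust pinball subgradient equals the conditional expectation of the clean pinball subgradient: E[ g̃(τ̂_t, S̃_t, (S_{t,y})_{y=1}^K) | F_{t−1} ] = E[ 1{S_t ≤ τ̂_t} − (1−α) | F_{t−1} ]; in particular this conditional expectation takes values in [α−1, α]. -/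
/-!
Let `H = F_{t-1} ∨ σ(Y_t, S_{t,·})`. Since `U_t` and `Ȳ_t` are independent of `H`, splitting
according to the event `{U_t ≥ ε}` and the value of `Ȳ_t` gives, for every `H`-event `A`,
  `P(S̃_t ≤ τ̂_t, A) = (1 - ε) P(S_t ≤ τ̂_t, A) + (ε / K) ∑_y P(S_{t,y} ≤ τ̂_t, A)`.
The correction term of `g̃` removes exactly the uniform part, so `E[g̃ | H]` is the clean
subgradient `1{S_t ≤ τ̂_t} - (1 - α)`, which is `H`-measurable. The tower property passes to
`F_{t-1}`, and the clean subgradient only takes the values `α - 1` and `α`.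
-/

open MeasureTheory ProbabilityTheory

section

variable {Ω ι : Type*} {m0 : MeasurableSpace Ω} {μ : Measure Ω}

theorem measurableSet_setOf_mem_apply [Countable ι] [MeasurableSpace ι]
    [MeasurableSingletonClass ι] {Y : Ω → ι} (hY : Measurable Y) {C : ι → Set Ω}
    (hC : ∀ i, MeasurableSet (C i)) : MeasurableSet {ω | ω ∈ C (Y ω)} := by
  have h : {ω | ω ∈ C (Y ω)} = ⋃ i, Y ⁻¹' {i} ∩ C i := by ext; simp
  rw [h]
  exact .iUnion fun i => (hY (measurableSet_singleton i)).inter (hC i)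

theorem setOf_mem_apply_eq_union_of_eqOn {E : Set Ω} {Y Ybar L : Ω → ι}
    (hLE : Set.EqOn L Y E) (hLEc : Set.EqOn L Ybar Eᶜ) (C : ι → Set Ω) :
    {ω | ω ∈ C (L ω)} = (E ∩ {ω | ω ∈ C (Y ω)}) ∪ ⋃ i, Eᶜ ∩ {ω | Ybar ω = i} ∩ C i := by
  ext ω
  by_cases hω : ω ∈ E
  · simp [hω, hLE hω]
  · simp [hω, hLEc hω]

theorem measurable_of_eqOn_of_eqOn_compl {β : Type*} [MeasurableSpace β] {E : Set Ω}
    (hE : MeasurableSet E) {Y Ybar L : Ω → β} (hY : Measurable Y) (hYbar : Measurable Ybar)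
    (hLE : Set.EqOn L Y E) (hLEc : Set.EqOn L Ybar Eᶜ) : Measurable L := by
  classical
  have hL : L = E.piecewise Y Ybar := by
    ext ω
    by_cases hω : ω ∈ E
    · simp [hω, hLE hω]
    · simp [hω, hLEc hω]
  exact hL ▸ hY.piecewise hE hYbar

theorem ProbabilityTheory.iIndep.measureReal_inter_inter {m₀ m₁ m₂ : MeasurableSpace Ω}
    (hind : iIndep ![m₀, m₁, m₂] μ) {s₀ s₁ s₂ : Set Ω} (h₀ : MeasurableSet[m₀] s₀)
    (h₁ : MeasurableSet[m₁] s₁) (h₂ : MeasurableSet[m₂] s₂) :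
    μ.real (s₀ ∩ s₁ ∩ s₂) = μ.real s₀ * μ.real s₁ * μ.real s₂ := by
  have h := hind.meas_iInter (s := ![s₀, s₁, s₂]) fun i => by fin_cases i <;> assumption
  have hinter : ⋂ i, ![s₀, s₁, s₂] i = s₀ ∩ s₁ ∩ s₂ := by
    ext; simp [Fin.forall_fin_succ, and_assoc]
  simp only [hinter, Fin.prod_univ_three] at h
  simp [measureReal_def, h, ENNReal.toReal_mul]

theorem measureReal_setOf_mem_apply_of_iIndep [IsProbabilityMeasure μ]
    [Fintype ι] [MeasurableSpace ι] [MeasurableSingletonClass ι] {mE mY H : MeasurableSpace Ω}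
    (hind : iIndep ![mE, mY, H] μ) (hmE : mE ≤ m0) (hmY : mY ≤ m0) (hH : H ≤ m0)
    {E : Set Ω} (hE : MeasurableSet[mE] E) {Ybar : Ω → ι} (hYbar : Measurable[mY] Ybar)
    {Y L : Ω → ι} (hY : Measurable[H] Y) (hLE : Set.EqOn L Y E) (hLEc : Set.EqOn L Ybar Eᶜ)
    {C : ι → Set Ω} (hC : ∀ i, MeasurableSet[H] (C i)) :
    μ.real {ω | ω ∈ C (L ω)} = μ.real E * μ.real {ω | ω ∈ C (Y ω)}
      + μ.real Eᶜ * ∑ i, μ.real {ω | Ybar ω = i} * μ.real (C i) := by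
  have hB : MeasurableSet[H] {ω | ω ∈ C (Y ω)} := measurableSet_setOf_mem_apply hY hC
  have hYbar_eq : ∀ i, MeasurableSet[mY] {ω | Ybar ω = i} :=
    fun i => hYbar (measurableSet_singleton i)
  have hdisj : Disjoint (E ∩ {ω | ω ∈ C (Y ω)}) (⋃ i, Eᶜ ∩ {ω | Ybar ω = i} ∩ C i) :=
    disjoint_compl_right.mono Set.inter_subset_left
      (Set.iUnion_subset fun i => Set.inter_subset_left.trans Set.inter_subset_left)
  have hpair : Pairwise (Function.onFun Disjoint fun i => Eᶜ ∩ {ω | Ybar ω = i} ∩ C i) :=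
    fun i j hij => Set.disjoint_left.2 fun ω hi hj => hij (hi.1.2.symm.trans hj.1.2)
  have hpiece : ∀ i, MeasurableSet[m0] (Eᶜ ∩ {ω | Ybar ω = i} ∩ C i) :=
    fun i => ((hmE _ hE).compl.inter (hmY _ (hYbar_eq i))).inter (hH _ (hC i))
  rw [setOf_mem_apply_eq_union_of_eqOn hLE hLEc,
    measureReal_union hdisj (MeasurableSet.iUnion hpiece),
    measureReal_iUnion_fintype hpair hpiece, Finset.mul_sum]
  congr 1
  · simpa using hind.measureReal_inter_inter hE .univ hB
  · refine Finset.sum_congr rfl fun i _ => ?_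
    rw [hind.measureReal_inter_inter hE.compl (hYbar_eq i) (hC i), mul_assoc]

theorem measureReal_setOf_le_of_map_eq_uniform {U : Ω → ℝ} (hU : Measurable U)
    (hmap : μ.map U = volume.restrict (Set.Icc 0 1)) {ε : ℝ} (hε : ε ∈ Set.Icc (0:ℝ) 1) :
    μ.real {ω | ε ≤ U ω} = 1 - ε := by
  have hIci : Set.Ici ε ∩ Set.Icc 0 1 = Set.Icc ε 1 := by
    ext x
    simp only [Set.mem_inter_iff, Set.mem_Ici, Set.mem_Icc]
    exact ⟨fun h => ⟨h.1, h.2.2⟩, fun h => ⟨h.1, hε.1.trans h.1, h.2⟩⟩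
  rw [measureReal_def, show {ω | ε ≤ U ω} = U ⁻¹' Set.Ici ε from rfl,
    ← Measure.map_apply hU measurableSet_Ici, hmap,
    Measure.restrict_apply measurableSet_Ici, hIci, Real.volume_Icc,
    ENNReal.toReal_ofReal (by linarith [hε.2])]

theorem ite_one_zero_eq_indicator (P : Ω → Prop) [DecidablePred P] :
    (fun ω => if P ω then (1:ℝ) else 0) = {ω | P ω}.indicator 1 := by
  ext ω
  simp [Set.indicator_apply]

theorem integrable_ite_one_zero [IsFiniteMeasure μ] {P : Ω → Prop}
    [DecidablePred P] (hP : MeasurableSet {ω | P ω}) :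
    Integrable (fun ω => if P ω then (1:ℝ) else 0) μ := by
  rw [ite_one_zero_eq_indicator]
  exact (integrable_const 1).indicator hP

theorem integrable_ite_sub_const [IsFiniteMeasure μ] {P : Ω → Prop}
    [DecidablePred P] (hP : MeasurableSet {ω | P ω}) (c : ℝ) :
    Integrable (fun ω => (if P ω then (1:ℝ) else 0) - c) μ :=
  (integrable_ite_one_zero hP).sub (integrable_const c)

theorem setIntegral_ite_sub_const [IsFiniteMeasure μ] {P : Ω → Prop}
    [DecidablePred P] (hP : MeasurableSet {ω | P ω}) (c : ℝ) (A : Set Ω) :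
    ∫ ω in A, ((if P ω then (1:ℝ) else 0) - c) ∂μ = μ.real ({ω | P ω} ∩ A) - c * μ.real A := by
  rw [integral_sub (integrable_ite_one_zero hP) (integrable_const c),
    ite_one_zero_eq_indicator, integral_indicator_one hP, measureReal_restrict_apply hP,
    setIntegral_const, smul_eq_mul, mul_comm]

theorem integrable_robustGrad [IsFiniteMeasure μ] {α ε : ℝ} {K : ℕ}
    {τ stil : Ω → ℝ} {s : Fin K → Ω → ℝ} (hstil : MeasurableSet {ω | stil ω ≤ τ ω})
    (hs : ∀ y, MeasurableSet {ω | s y ω ≤ τ ω}) :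
    Integrable (fun ω => robustGrad α ε K (τ ω) (stil ω) (fun y => s y ω)) μ :=
  ((integrable_ite_sub_const hstil _).const_mul _).sub
    ((integrable_finsetSum _ fun y _ => integrable_ite_sub_const (hs y) _).const_mul _)

theorem setIntegral_robustGrad [IsFiniteMeasure μ] {α ε : ℝ} {K : ℕ}
    {τ stil : Ω → ℝ} {s : Fin K → Ω → ℝ} (hstil : MeasurableSet {ω | stil ω ≤ τ ω})
    (hs : ∀ y, MeasurableSet {ω | s y ω ≤ τ ω}) (A : Set Ω) :
    ∫ ω in A, robustGrad α ε K (τ ω) (stil ω) (fun y => s y ω) ∂μ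
      = 1 / (1 - ε) * (μ.real ({ω | stil ω ≤ τ ω} ∩ A) - (1 - α) * μ.real A)
        - ε / (K * (1 - ε)) * ∑ y, (μ.real ({ω | s y ω ≤ τ ω} ∩ A) - (1 - α) * μ.real A) := by
  simp only [robustGrad]
  rw [integral_sub ((integrable_ite_sub_const hstil _).const_mul _)
      ((integrable_finsetSum _ fun y _ => integrable_ite_sub_const (hs y) _).const_mul _),
    integral_const_mul, integral_const_mul,
    integral_finsetSum _ fun y _ => integrable_ite_sub_const (hs y) _,
    setIntegral_ite_sub_const hstil]
  simp only [setIntegral_ite_sub_const (hs _)]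

theorem condExp_robustGrad_ae_eq [IsProbabilityMeasure μ]
    {mE mY H : MeasurableSpace Ω} (hind : iIndep ![mE, mY, H] μ) (hmE : mE ≤ m0)
    (hmY : mY ≤ m0) (hH : H ≤ m0) {ε α : ℝ} (hε : ε ≠ 1) {E : Set Ω}
    (hE : MeasurableSet[mE] E) (hμE : μ.real E = 1 - ε) {K : ℕ} (hK : K ≠ 0)
    {Ybar : Ω → Fin K} (hYbar : Measurable[mY] Ybar)
    (hunif : ∀ y, μ.real {ω | Ybar ω = y} = (K : ℝ)⁻¹) {Y L : Ω → Fin K}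
    (hLE : Set.EqOn L Y E) (hLEc : Set.EqOn L Ybar Eᶜ) {S : Fin K → Ω → ℝ}
    (hYS : Measurable[H] fun ω => (Y ω, fun y => S y ω)) {τ : Ω → ℝ} (hτ : Measurable[H] τ) :
    μ[fun ω => robustGrad α ε K (τ ω) (S (L ω) ω) (fun y => S y ω) | H]
      =ᵐ[μ] fun ω => (if S (Y ω) ω ≤ τ ω then (1:ℝ) else 0) - (1 - α) := by
  have hY : Measurable[H] Y := measurable_fst.comp hYS
  have hC : ∀ y, MeasurableSet[H] {ω | S y ω ≤ τ ω} := fun y =>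
    measurableSet_le ((measurable_pi_apply y).comp (measurable_snd.comp hYS)) hτ
  have hC0 : ∀ y, MeasurableSet[m0] {ω | S y ω ≤ τ ω} := fun y => hH _ (hC y)
  have hB : MeasurableSet[H] {ω | S (Y ω) ω ≤ τ ω} := measurableSet_setOf_mem_apply hY hC
  have hL : Measurable[m0] L := measurable_of_eqOn_of_eqOn_compl (hmE _ hE) (hY.mono hH le_rfl)
    (hYbar.mono hmY le_rfl) hLE hLEc
  have hD : MeasurableSet[m0] {ω | S (L ω) ω ≤ τ ω} := measurableSet_setOf_mem_apply hL hC0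
  have hsetIntegral : ∀ A, MeasurableSet[H] A →
      ∫ ω in A, (if S (Y ω) ω ≤ τ ω then (1:ℝ) else 0) - (1 - α) ∂μ
        = ∫ ω in A, robustGrad α ε K (τ ω) (S (L ω) ω) (fun y => S y ω) ∂μ := by
    intro A hA
    have hmix : μ.real ({ω | S (L ω) ω ≤ τ ω} ∩ A)
        = (1 - ε) * μ.real ({ω | S (Y ω) ω ≤ τ ω} ∩ A)
          + ε * ((K : ℝ)⁻¹ * ∑ y, μ.real ({ω | S y ω ≤ τ ω} ∩ A)) := by
      have h := measureReal_setOf_mem_apply_of_iIndep hind hmE hmY hH hE hYbar hY hLE hLEc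
        (C := fun y => {ω | S y ω ≤ τ ω} ∩ A) fun y => (hC y).inter hA
      simp only [probReal_compl_eq_one_sub (hmE _ hE), hμE, sub_sub_cancel, hunif,
        ← Finset.mul_sum] at h
      exact h
    rw [setIntegral_robustGrad hD hC0, setIntegral_ite_sub_const (hH _ hB), hmix,
      Finset.sum_sub_distrib, Finset.sum_const, Finset.card_univ, Fintype.card_fin, nsmul_eq_mul]
    have hK' : (K : ℝ) ≠ 0 := Nat.cast_ne_zero.2 hK
    have hε' : 1 - ε ≠ 0 := sub_ne_zero.2 hε.symm
    field_simp
    ring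
  exact (ae_eq_condExp_of_forall_setIntegral_eq hH (integrable_robustGrad hD hC0)
    (fun s _ _ => (integrable_ite_sub_const (hH _ hB) _).integrableOn)
    (fun s hs _ => hsetIntegral s hs)
    ((Measurable.ite hB measurable_const measurable_const).sub_const _).aestronglyMeasurable).symm

theorem ae_condExp_mem_Icc [IsFiniteMeasure μ] {m : MeasurableSpace Ω}
    (hm : m ≤ m0) {f : Ω → ℝ} (hf : Integrable f μ) {a b : ℝ}
    (hab : ∀ ω, f ω ∈ Set.Icc a b) : ∀ᵐ ω ∂μ, μ[f | m] ω ∈ Set.Icc a b := by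
  have hlow := condExp_mono (m := m) (integrable_const a) hf (ae_of_all _ fun ω => (hab ω).1)
  have hupp := condExp_mono (m := m) hf (integrable_const b) (ae_of_all _ fun ω => (hab ω).2)
  rw [condExp_const hm] at hlow hupp
  filter_upwards [hlow, hupp] with ω h₁ h₂ using ⟨h₁, h₂⟩

end

theorem robust_grad_condexp_eq_clean_grad_condexp_general
    {Ω : Type*} {m0 : MeasurableSpace Ω} (μ : Measure Ω) [IsProbabilityMeasure μ]
    (F : Filtration ℕ m0)
    (K : ℕ) (hK : 1 ≤ K) (ε α : ℝ) (hε : ε ∈ Set.Ioo (0:ℝ) 1)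
    (S : ℕ → Fin K → Ω → ℝ) (Y : ℕ → Ω → Fin K) (U : ℕ → Ω → ℝ) (Ybar : ℕ → Ω → Fin K)
    -- measurability of the scores and labels with respect to the filtration
    (hS_meas : ∀ t, 1 ≤ t → ∀ y, Measurable[F t] (S t y))
    (hY_meas : ∀ t, 1 ≤ t → Measurable[F t] (Y t))
    (hU_meas : ∀ t, 1 ≤ t → Measurable[F t] (U t))
    (hYbar_meas : ∀ t, 1 ≤ t → Measurable[F t] (Ybar t))
    -- U_t is uniformly distributed on [0,1], Ȳ_t uniformly on {1,…,K}
    (hU_unif : ∀ t, 1 ≤ t → Measure.map (U t) μ = volume.restrict (Set.Icc (0:ℝ) 1))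
    (hYbar_unif : ∀ t, 1 ≤ t → ∀ y : Fin K, μ {ω | Ybar t ω = y} = (K : ENNReal)⁻¹)
    -- U_t, Ȳ_t and the σ-algebra generated by F_{t-1} together with (Y_t, S_{t,·})
    -- are mutually independent
    (hIndep : ∀ t, 1 ≤ t →
      iIndep
        ![MeasurableSpace.comap (U t) inferInstance,
          MeasurableSpace.comap (Ybar t) inferInstance,
          (F (t - 1) : MeasurableSpace Ω) ⊔
            MeasurableSpace.comap (fun ω => (Y t ω, fun y => S t y ω)) inferInstance] μ)
    -- the noisy labels
    (Ytil : ℕ → Ω → Fin K)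
    (hYtil : ∀ t, 1 ≤ t → ∀ ω, Ytil t ω = if ε ≤ U t ω then Y t ω else Ybar t ω)
    -- thresholds adapted to the previous σ-algebra
    (τ : ℕ → Ω → ℝ) (hτ_meas : ∀ t, 1 ≤ t → Measurable[F (t - 1)] (τ t)) :
    ∀ t, 1 ≤ t →
      (μ[fun ω' => robustGrad α ε K (τ t ω') (S t (Ytil t ω') ω')
            (fun y => S t y ω') | F (t - 1)]
        =ᵐ[μ]
          μ[fun ω' => (if S t (Y t ω') ω' ≤ τ t ω' then (1:ℝ) else 0) - (1 - α)
            | F (t - 1)]) ∧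
      (∀ᵐ ω ∂μ,
        (μ[fun ω' => robustGrad α ε K (τ t ω') (S t (Ytil t ω') ω')
              (fun y => S t y ω') | F (t - 1)]) ω ∈ Set.Icc (α - 1) α) := by
  intro t ht
  have hU : Measurable[m0] (U t) := (hU_meas t ht).mono (F.le t) le_rfl
  have hH : (F (t - 1) : MeasurableSpace Ω)
      ⊔ .comap (fun ω => (Y t ω, fun y => S t y ω)) inferInstance ≤ m0 :=
    sup_le (F.le _) (Measurable.comap_le <| ((hY_meas t ht).mono (F.le t) le_rfl).prodMk
      (measurable_pi_iff.2 fun y => (hS_meas t ht y).mono (F.le t) le_rfl))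
  have hclean := condExp_robustGrad_ae_eq (α := α) (E := {ω | ε ≤ U t ω}) (Y := Y t)
    (L := Ytil t) (S := S t) (τ := τ t) (hIndep t ht) hU.comap_le
    ((hYbar_meas t ht).mono (F.le t) le_rfl).comap_le hH hε.2.ne ⟨Set.Ici ε, measurableSet_Ici, rfl⟩
    (measureReal_setOf_le_of_map_eq_uniform hU (hU_unif t ht) (Set.Ioo_subset_Icc_self hε))
    (by omega) (comap_measurable _) (fun y => by simp [measureReal_def, hYbar_unif t ht y])
    (fun ω (hω : ε ≤ U t ω) => by rw [hYtil t ht, if_pos hω])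
    (fun ω (hω : ¬ε ≤ U t ω) => by rw [hYtil t ht, if_neg hω])
    ((comap_measurable _).mono le_sup_right le_rfl) ((hτ_meas t ht).mono le_sup_left le_rfl)
  have heq := (condExp_condExp_of_le le_sup_left hH).symm.trans (condExp_congr_ae hclean)
  refine ⟨heq, ?_⟩
  have hbound := ae_condExp_mem_Icc (a := α - 1) (b := α) (F.le (t - 1))
    (integrable_condExp.congr hclean) fun ω => by split_ifs <;> constructor <;> linarith
  filter_upwards [heq, hbound] with ω h₁ h₂
  rwa [h₁]

/-- conditionally on F_{t-1}, the robust pinball subgradient has the same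
expectation as the clean pinball subgradient, and this conditional expectation lies in
[α − 1, α]. -/
theorem robust_grad_condexp_eq_clean_grad_condexp
    {Ω : Type*} {m0 : MeasurableSpace Ω} (μ : Measure Ω) [IsProbabilityMeasure μ]
    (F : Filtration ℕ m0)
    (K : ℕ) (hK : 1 ≤ K) (ε α : ℝ) (hε : ε ∈ Set.Ioo (0:ℝ) 1) (hα : α ∈ Set.Ioo (0:ℝ) 1)
    (S : ℕ → Fin K → Ω → ℝ) (Y : ℕ → Ω → Fin K) (U : ℕ → Ω → ℝ) (Ybar : ℕ → Ω → Fin K)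
    -- measurability of the scores and labels with respect to the filtration
    (hS_meas : ∀ t, 1 ≤ t → ∀ y, Measurable[F t] (S t y))
    (hS_range : ∀ t, 1 ≤ t → ∀ y ω, S t y ω ∈ Set.Icc (0:ℝ) 1)
    (hY_meas : ∀ t, 1 ≤ t → Measurable[F t] (Y t))
    (hU_meas : ∀ t, 1 ≤ t → Measurable[F t] (U t))
    (hYbar_meas : ∀ t, 1 ≤ t → Measurable[F t] (Ybar t))
    -- U_t is uniformly distributed on [0,1], Ȳ_t uniformly on {1,…,K}
    (hU_unif : ∀ t, 1 ≤ t → Measure.map (U t) μ = volume.restrict (Set.Icc (0:ℝ) 1))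
    (hYbar_unif : ∀ t, 1 ≤ t → ∀ y : Fin K, μ {ω | Ybar t ω = y} = (K : ENNReal)⁻¹)
    -- U_t, Ȳ_t and the σ-algebra generated by F_{t-1} together with (Y_t, S_{t,·})
    -- are mutually independent
    (hIndep : ∀ t, 1 ≤ t →
      iIndep
        ![MeasurableSpace.comap (U t) inferInstance,
          MeasurableSpace.comap (Ybar t) inferInstance,
          (F (t - 1) : MeasurableSpace Ω) ⊔
            MeasurableSpace.comap (fun ω => (Y t ω, fun y => S t y ω)) inferInstance] μ)
    -- the noisy labels
    (Ytil : ℕ → Ω → Fin K)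
    (hYtil : ∀ t, 1 ≤ t → ∀ ω, Ytil t ω = if ε ≤ U t ω then Y t ω else Ybar t ω)
    -- thresholds adapted to the previous σ-algebra
    (τ : ℕ → Ω → ℝ) (hτ_meas : ∀ t, 1 ≤ t → Measurable[F (t - 1)] (τ t)) :
    ∀ t, 1 ≤ t →
      (μ[fun ω' => robustGrad α ε K (τ t ω') (S t (Ytil t ω') ω')
            (fun y => S t y ω') | F (t - 1)]
        =ᵐ[μ]
          μ[fun ω' => (if S t (Y t ω') ω' ≤ τ t ω' then (1:ℝ) else 0) - (1 - α)
            | F (t - 1)]) ∧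
      (∀ᵐ ω ∂μ,
        (μ[fun ω' => robustGrad α ε K (τ t ω') (S t (Ytil t ω') ω')
              (fun y => S t y ω') | F (t - 1)]) ω ∈ Set.Icc (α - 1) α) :=
  robust_grad_condexp_eq_clean_grad_condexp_general μ F K hK ε α hε S Y U Ybar hS_meas hY_meas
    hU_meas hYbar_meas hU_unif hYbar_unif hIndep Ytil hYtil τ hτ_meas
end
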